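/- arXiv:2005.00236 — 2 statements merged into one kernel-verified Lean document; each statement's English description precedes it below -/
import Mathlib

section
/- Let X ⊆ ℝ be a bounded measurable set, let a < b be real numbers, and let η, η_1, η_2, … : ℝ → ℝ be measurable functions such that sup_{x∈X} |η_k(x) − η(x)| → 0 as k → ∞. Assume the boundary preimage is Lebesgue-null: Leb({x ∈ X : η(x) = a or η(x) = b}) = 0. Then Leb({x ∈ X : η_k(x) ∈ [a,b]}) → Leb({x ∈ X : η(x) ∈ [a,b]}) as k → ∞. -/
open MeasureTheory Filter Topology Set

/-! Push the volume on `X` forward along `η` to a finite measure `ν` on `ℝ`. Once `|η_k - η| < ε`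
on `X`, the set where `η_k ∈ [a, b]` lies between the `η`-preimages of `[a + ε, b - ε]` and
`[a - ε, b + ε]`. As `ε → 0⁺` their measures increase to `ν (a, b)` and decrease to `ν [a, b]`
(finiteness of `ν` is what makes the latter work), and these agree because `ν {a, b} = 0`. -/

theorem Filter.Tendsto.of_forall_eventually_between {ι κ α : Type*} [TopologicalSpace α]
    [Preorder α] [OrderTopology α] {l : Filter ι} [l.NeBot] {f : Filter κ}
    {lo hi : ι → α} {u : κ → α} {L : α} (hlo : Tendsto lo l (𝓝 L)) (hhi : Tendsto hi l (𝓝 L))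
    (h : ∀ᶠ i in l, ∀ᶠ k in f, lo i ≤ u k ∧ u k ≤ hi i) : Tendsto u f (𝓝 L) := by
  rw [tendsto_order] at hlo hhi ⊢
  refine ⟨fun c hc => ?_, fun c hc => ?_⟩
  · obtain ⟨i, hci, hi⟩ := ((hlo.1 c hc).and h).exists
    exact hi.mono fun k hk => hci.trans_le hk.1
  · obtain ⟨i, hci, hi⟩ := ((hhi.2 c hc).and h).exists
    exact hi.mono fun k hk => hk.2.trans_lt hci

section
variable {α : Type*} {X : Set α} {f g : α → ℝ} {a b ε : ℝ}

theorem sep_preimage_Icc_add_sub_subset (h : ∀ x ∈ X, dist (f x) (g x) < ε) :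
    {x ∈ X | f x ∈ Icc (a + ε) (b - ε)} ⊆ {x ∈ X | g x ∈ Icc a b} := by
  rintro x ⟨hx, hfa, hfb⟩
  have := abs_sub_lt_iff.1 (h x hx)
  exact ⟨hx, by linarith, by linarith⟩

theorem sep_preimage_Icc_subset_sub_add (h : ∀ x ∈ X, dist (f x) (g x) < ε) :
    {x ∈ X | g x ∈ Icc a b} ⊆ {x ∈ X | f x ∈ Icc (a - ε) (b + ε)} := by
  rintro x ⟨hx, hga, hgb⟩
  have := abs_sub_lt_iff.1 (h x hx)
  exact ⟨hx, by linarith, by linarith⟩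

end

namespace Real

theorem biInter_Icc_sub_add (a b : ℝ) : ⋂ ε > 0, Icc (a - ε) (b + ε) = Icc a b := by
  ext x
  simp only [mem_iInter, mem_Icc]
  refine ⟨fun h => ⟨le_of_forall_pos_le_add fun ε hε => ?_, le_of_forall_pos_le_add fun ε hε => ?_⟩,
    fun ⟨hax, hxb⟩ ε hε => ⟨by linarith, by linarith⟩⟩
  · linarith [(h ε hε).1]
  · exact (h ε hε).2

theorem iUnion_Icc_add_sub (a b : ℝ) : ⋃ ε : Ioi (0 : ℝ), Icc (a + ε) (b - ε) = Ioo a b := by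
  ext x
  simp only [mem_iUnion, mem_Icc, mem_Ioo, Subtype.exists, mem_Ioi, exists_prop]
  refine ⟨fun ⟨ε, hε, hax, hxb⟩ => ⟨by linarith, by linarith⟩, fun ⟨hax, hxb⟩ => ?_⟩
  exact ⟨min (x - a) (b - x), lt_min (by linarith) (by linarith),
    by linarith [min_le_left (x - a) (b - x)], by linarith [min_le_right (x - a) (b - x)]⟩

variable (ν : Measure ℝ) (a b : ℝ)

theorem tendsto_measure_Icc_sub_add [IsFiniteMeasure ν] :
    Tendsto (fun ε => ν (Icc (a - ε) (b + ε))) (𝓝[>] 0) (𝓝 (ν (Icc a b))) := by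
  rw [← biInter_Icc_sub_add a b]
  exact tendsto_measure_biInter_gt (fun _ _ => measurableSet_Icc.nullMeasurableSet)
    (fun _ _ _ hij => Icc_subset_Icc (by linarith) (by linarith)) ⟨1, one_pos, measure_ne_top _ _⟩

theorem tendsto_measure_Icc_add_sub :
    Tendsto (fun ε => ν (Icc (a + ε) (b - ε))) (𝓝[>] 0) (𝓝 (ν (Ioo a b))) := by
  rw [← map_coe_Ioi_atBot, tendsto_map'_iff, ← iUnion_Icc_add_sub]
  refine tendsto_measure_iUnion_atBot fun ε δ (hεδ : (ε : ℝ) ≤ δ) => ?_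
  exact Icc_subset_Icc (by linarith) (by linarith)

end Real

theorem measure_preimage_Icc_tendsto_of_tendstoUniformlyOn_general
    (X : Set ℝ) (hXb : Bornology.IsBounded X)
    (a b : ℝ)
    (η : ℝ → ℝ) (ηk : ℕ → ℝ → ℝ)
    (hη : Measurable η)
    (hunif : TendstoUniformlyOn ηk η atTop X)
    (hboundary : volume {x ∈ X | η x = a ∨ η x = b} = 0) :
    Tendsto (fun k => volume {x ∈ X | ηk k x ∈ Set.Icc a b}) atTop
      (𝓝 (volume {x ∈ X | η x ∈ Set.Icc a b})) := by
  set ν := (volume.restrict X).map η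
  have hν : ∀ s, MeasurableSet s → ν s = volume {x ∈ X | η x ∈ s} := fun s hs => by
    rw [Measure.map_apply hη hs, Measure.restrict_apply (hη hs), inter_comm]; rfl
  have : IsFiniteMeasure (volume.restrict X) := isFiniteMeasure_restrict.2 hXb.measure_lt_top.ne
  have hends : ν {a, b} = 0 := by
    rw [hν _ (.insert (.singleton b) a)]
    simpa using hboundary
  have hlo := Real.tendsto_measure_Icc_add_sub ν a b
  rw [← Icc_sdiff_both, measure_sdiff_null hends] at hlo
  rw [← hν _ measurableSet_Icc]
  refine hlo.of_forall_eventually_between (Real.tendsto_measure_Icc_sub_add ν a b) ?_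
  filter_upwards [self_mem_nhdsWithin] with ε hε
  filter_upwards [Metric.tendstoUniformlyOn_iff.1 hunif ε hε] with k hk
  rw [hν _ measurableSet_Icc, hν _ measurableSet_Icc]
  exact ⟨measure_mono (sep_preimage_Icc_add_sub_subset hk),
    measure_mono (sep_preimage_Icc_subset_sub_add hk)⟩

/-- Lemma 2 (prior continuity) of the paper: if `η_k → η` uniformly on a bounded measurable
set `X ⊆ ℝ` and the boundary preimage `{x ∈ X : η x = a ∨ η x = b}` is Lebesgue-null, then
the Lebesgue measures of the sets `{x ∈ X : η_k x ∈ [a,b]}` converge to that of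
`{x ∈ X : η x ∈ [a,b]}`. -/
theorem measure_preimage_Icc_tendsto_of_tendstoUniformlyOn
    (X : Set ℝ) (hXb : Bornology.IsBounded X) (hXm : MeasurableSet X)
    (a b : ℝ) (hab : a < b)
    (η : ℝ → ℝ) (ηk : ℕ → ℝ → ℝ)
    (hη : Measurable η) (hηk : ∀ k, Measurable (ηk k))
    (hunif : TendstoUniformlyOn ηk η atTop X)
    (hboundary : volume {x ∈ X | η x = a ∨ η x = b} = 0) :
    Tendsto (fun k => volume {x ∈ X | ηk k x ∈ Set.Icc a b}) atTop
      (𝓝 (volume {x ∈ X | η x ∈ Set.Icc a b})) :=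
  measure_preimage_Icc_tendsto_of_tendstoUniformlyOn_general X hXb a b η ηk hη hunif hboundary
end

section
/- Let X ⊆ ℝ be a bounded measurable set, a < b real numbers, and η, η_1, η_2, … : ℝ → ℝ measurable with sup_{x∈X} |η_k(x) − η(x)| → 0. Write B(η) = {x ∈ X : η(x) ∈ [a,b]} and assume Leb({x ∈ X : η(x) = a or η(x) = b}) = 0 and Leb(B(η)) > 0. Then for every measurable set A ⊆ ℝ, the uniform-distribution probabilities converge: Leb(A ∩ B(η_k)) / Leb(B(η_k)) → Leb(A ∩ B(η)) / Leb(B(η)) as k → ∞. -/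
/-!
Once `η_k` is uniformly `δ`-close to `η` on `X`, the set `B(η_k)` contains the points of `X` where
`η` is farther than `δ` from `[a, b]ᶜ` and is contained in those where `η` is within `δ` of
`[a, b]`. Pushing Lebesgue measure on `X` forward by `η`, the measures of these two sets tend, as
`δ → 0`, to the pushforward measures of the interior and of the closure of `[a, b]`, which agree
because the preimage of the frontier `{a, b}` is null. The ratio converges because the limiting
denominator is positive and finite.
-/

open MeasureTheory Filter Topology Metric Set

theorem tendsto_of_forall_eventually_mem_Icc {ι κ β : Type*} [TopologicalSpace β] [LinearOrder β]
    [OrderTopology β] {l : Filter ι} {m : Filter κ} [m.NeBot] {u : ι → β} {g h : κ → β} {L : β}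
    (hg : Tendsto g m (𝓝 L)) (hh : Tendsto h m (𝓝 L))
    (hu : ∀ᶠ δ in m, ∀ᶠ i in l, u i ∈ Icc (g δ) (h δ)) : Tendsto u l (𝓝 L) := by
  refine tendsto_order.2 ⟨fun c hc => ?_, fun c hc => ?_⟩
  · obtain ⟨δ, hcg, hδ⟩ := ((hg.eventually (eventually_gt_nhds hc)).and hu).exists
    filter_upwards [hδ] with i hi using hcg.trans_le hi.1
  · obtain ⟨δ, hhc, hδ⟩ := ((hh.eventually (eventually_lt_nhds hc)).and hu).exists
    filter_upwards [hδ] with i hi using hi.2.trans_lt hhc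

section

variable {α E : Type*} [PseudoMetricSpace E] {s : Set α} {f g : α → E} {I : Set E} {δ : ℝ}

theorem inter_preimage_subset_inter_preimage_cthickening (hfg : ∀ x ∈ s, dist (f x) (g x) < δ) :
    s ∩ g ⁻¹' I ⊆ s ∩ f ⁻¹' cthickening δ I :=
  fun x ⟨hs, hI⟩ => ⟨hs, mem_cthickening_of_dist_le _ _ _ _ hI (hfg x hs).le⟩

theorem inter_preimage_compl_cthickening_compl_subset (hfg : ∀ x ∈ s, dist (f x) (g x) < δ) :
    s ∩ f ⁻¹' (cthickening δ Iᶜ)ᶜ ⊆ s ∩ g ⁻¹' I :=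
  fun x ⟨hs, hI⟩ =>
    ⟨hs, not_not.1 fun hg => hI (mem_cthickening_of_dist_le _ _ _ _ hg (hfg x hs).le)⟩

variable [MeasurableSpace α] [MeasurableSpace E] [OpensMeasurableSpace E] {μ : Measure α}

theorem tendsto_measure_inter_preimage_of_tendstoUniformlyOn {ι : Type*} {F : ι → α → E}
    {l : Filter ι} (hs : μ s ≠ ⊤) (hf : AEMeasurable f (μ.restrict s))
    (hF : TendstoUniformlyOn F f l s) (hI : μ (s ∩ f ⁻¹' frontier I) = 0) :
    Tendsto (fun i => μ (s ∩ F i ⁻¹' I)) l (𝓝 (μ (s ∩ f ⁻¹' I))) := by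
  set ν := (μ.restrict s).map f
  have : IsFiniteMeasure ν := by
    have : IsFiniteMeasure (μ.restrict s) := isFiniteMeasure_restrict.2 hs
    infer_instance
  have hν : ∀ C, MeasurableSet C → μ (s ∩ f ⁻¹' C) = ν C := fun C hC => by
    rw [Measure.map_apply_of_aemeasurable hf hC, Measure.restrict_apply₀ (hf.nullMeasurable hC),
      inter_comm]
  have hνI : ν (interior I) = ν (closure I) := by
    have : ν (frontier I) = 0 := by rwa [← hν _ isClosed_frontier.measurableSet]
    rw [measure_interior_of_null_frontier this, measure_closure_of_null_frontier this]
  have hlim : μ (s ∩ f ⁻¹' I) = ν (closure I) := by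
    refine le_antisymm ((measure_mono ?_).trans_eq (hν _ isClosed_closure.measurableSet)) ?_
    · exact inter_subset_inter_right _ (preimage_mono subset_closure)
    · rw [← hνI, ← hν _ isOpen_interior.measurableSet]
      exact measure_mono (inter_subset_inter_right _ (preimage_mono interior_subset))
  have hupper : Tendsto (fun δ => ν (cthickening δ I)) (𝓝 0) (𝓝 (ν (closure I))) :=
    tendsto_measure_cthickening ⟨1, one_pos, measure_ne_top _ _⟩
  have hlower : Tendsto (fun δ => ν (cthickening δ Iᶜ)ᶜ) (𝓝 0) (𝓝 (ν (closure I))) := by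
    have := ENNReal.Tendsto.sub (tendsto_const_nhds (x := ν univ))
      (tendsto_measure_cthickening (μ := ν) (s := Iᶜ) ⟨1, one_pos, measure_ne_top _ _⟩)
      (Or.inl (measure_ne_top _ _))
    simp_rw [← measure_compl isClosed_cthickening.measurableSet (measure_ne_top _ _),
      ← measure_compl isClosed_closure.measurableSet (measure_ne_top _ _), closure_compl,
      compl_compl, hνI] at this
    exact this
  rw [hlim]
  refine tendsto_of_forall_eventually_mem_Icc (m := 𝓝[>] 0) (hlower.mono_left nhdsWithin_le_nhds)
    (hupper.mono_left nhdsWithin_le_nhds) ?_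
  filter_upwards [self_mem_nhdsWithin] with δ (hδ : 0 < δ)
  filter_upwards [Metric.tendstoUniformlyOn_iff.1 hF δ hδ] with i hi
  rw [← hν _ isClosed_cthickening.measurableSet,
    ← hν _ isClosed_cthickening.measurableSet.compl]
  exact ⟨measure_mono (inter_preimage_compl_cthickening_compl_subset hi),
    measure_mono (inter_preimage_subset_inter_preimage_cthickening hi)⟩

end

theorem uniform_prior_prob_tendsto_of_tendstoUniformlyOn_general
    (X : Set ℝ) (hXb : Bornology.IsBounded X)
    (a b : ℝ) (hab : a < b)
    (η : ℝ → ℝ) (ηk : ℕ → ℝ → ℝ)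
    (hη : Measurable η)
    (hunif : TendstoUniformlyOn ηk η atTop X)
    (B : (ℝ → ℝ) → Set ℝ)
    (hB : ∀ f : ℝ → ℝ, B f = {x ∈ X | f x ∈ Set.Icc a b})
    (hboundary : volume {x ∈ X | η x = a ∨ η x = b} = 0)
    (hpos : 0 < volume (B η)) :
    ∀ A : Set ℝ, MeasurableSet A →
      Tendsto (fun k => volume (A ∩ B (ηk k)) / volume (B (ηk k))) atTop
        (𝓝 (volume (A ∩ B η) / volume (B η))) := by
  intro A _
  have hBpre : ∀ f, B f = X ∩ f ⁻¹' Icc a b := hB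
  have hconv : ∀ s ⊆ X, Tendsto (fun k => volume (s ∩ ηk k ⁻¹' Icc a b)) atTop
      (𝓝 (volume (s ∩ η ⁻¹' Icc a b))) := by
    intro s hs
    refine tendsto_measure_inter_preimage_of_tendstoUniformlyOn (hXb.subset hs).measure_lt_top.ne
      hη.aemeasurable (hunif.mono hs) (measure_mono_null ?_ hboundary)
    rw [frontier_Icc hab.le]
    exact fun x hx => ⟨hs hx.1, hx.2⟩
  simp only [hBpre, ← inter_assoc] at hpos ⊢
  exact ENNReal.Tendsto.div (hconv _ inter_subset_right) (Or.inr hpos.ne') (hconv X subset_rfl)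
    (Or.inl (measure_mono inter_subset_left |>.trans_lt hXb.measure_lt_top).ne)

/-- Second assertion of Lemma 2 of the paper: with `B(η) = {x ∈ X : η x ∈ [a,b]}`, if
`η_k → η` uniformly on the bounded measurable set `X`, the boundary preimage is
Lebesgue-null and `Leb(B(η)) > 0`, then for every measurable `A ⊆ ℝ` the uniform-distribution
probabilities `Leb(A ∩ B(η_k)) / Leb(B(η_k))` converge to `Leb(A ∩ B(η)) / Leb(B(η))`. -/
theorem uniform_prior_prob_tendsto_of_tendstoUniformlyOn
    (X : Set ℝ) (hXb : Bornology.IsBounded X) (hXm : MeasurableSet X)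
    (a b : ℝ) (hab : a < b)
    (η : ℝ → ℝ) (ηk : ℕ → ℝ → ℝ)
    (hη : Measurable η) (hηk : ∀ k, Measurable (ηk k))
    (hunif : TendstoUniformlyOn ηk η atTop X)
    (B : (ℝ → ℝ) → Set ℝ)
    (hB : ∀ f : ℝ → ℝ, B f = {x ∈ X | f x ∈ Set.Icc a b})
    (hboundary : volume {x ∈ X | η x = a ∨ η x = b} = 0)
    (hpos : 0 < volume (B η)) :
    ∀ A : Set ℝ, MeasurableSet A →
      Tendsto (fun k => volume (A ∩ B (ηk k)) / volume (B (ηk k))) atTop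
        (𝓝 (volume (A ∩ B η) / volume (B η))) :=
  uniform_prior_prob_tendsto_of_tendstoUniformlyOn_general X hXb a b hab η ηk hη hunif B hB
    hboundary hpos
end
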